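/- Let A be a commutative ring which is a ℂ-algebra and let x, z ∈ A satisfy x·z = 0. Fix t ∈ ℂ and an integer N ≥ 1, and set β := 0. Then the Branson–Gover element factorizes as L_N = N·(x − z)·∏_{k=2}^{N} ( x + z − k(k−1)·t ). -/
import Mathlib


open Finset

/-- Ascending Pochhammer symbol `(a)_k = ∏_{i=0}^{k-1} (a+i)`. -/
noncomputable def poch (a : ℂ) (k : ℕ) : ℂ := ∏ i ∈ Finset.range k, (a + i)

/-- `P_N = ∏_{l=1}^N (x + (β/2+l-1)(β/2-l)·t)`, modelling `(2J/n)^N R_N(y^(+);0)`. -/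
noncomputable def Ppoly {A : Type*} [CommRing A] [Algebra ℂ A] (x : A) (β t : ℂ) (N : ℕ) : A :=
  ∏ l ∈ Finset.Icc 1 N, (x + ((β/2 + (l:ℂ) - 1) * (β/2 - (l:ℂ)) * t) • (1 : A))

/-- `Q_N = ∑_{j=1}^N (β/2-N+j+1)_{2(N-j)} t^{N-j} z ∏_{l=1}^{j-1} (z + (β/2+N-l+1)(β/2-N+l)·t)`,
modelling `(2J/n)^N R^(1)_N(y^(1))`. -/
noncomputable def Qpoly {A : Type*} [CommRing A] [Algebra ℂ A] (z : A) (β t : ℂ) (N : ℕ) : A :=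
  ∑ j ∈ Finset.Icc 1 N,
    (poch (β/2 - (N:ℂ) + (j:ℂ) + 1) (2*(N-j)) * t^(N-j)) •
      (z * ∏ l ∈ Finset.Icc 1 (j-1), (z + ((β/2 + (N:ℂ) - (l:ℂ) + 1) * (β/2 - (N:ℂ) + (l:ℂ)) * t) • (1 : A)))

/-- Normalized Branson–Gover element `L̄_N = (β/2-N+1)_{2N}·P_N + (β/2-N)_{2N}·Q_N`. -/
noncomputable def Lbar {A : Type*} [CommRing A] [Algebra ℂ A] (x z : A) (β t : ℂ) (N : ℕ) : A :=
  (poch (β/2 - (N:ℂ) + 1) (2*N)) • Ppoly x β t N + (poch (β/2 - (N:ℂ)) (2*N)) • Qpoly z β t N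

/-- Branson–Gover element `L_N = (β/2+N)·P_N + (β/2-N)·Q_N`. -/
noncomputable def Lel {A : Type*} [CommRing A] [Algebra ℂ A] (x z : A) (β t : ℂ) (N : ℕ) : A :=
  ((β/2 + (N:ℂ)) • Ppoly x β t N) + ((β/2 - (N:ℂ)) • Qpoly z β t N)

/-- Key algebraic lemma: if `x·z = 0`, then multiplying a product of `(x+z-c_k)` by `x`
lets us drop the `z`. -/
lemma mul_prod_key {A : Type*} [CommRing A] (x z : A) (hxz : x * z = 0)
    (s : Finset ℕ) (c : ℕ → A) :
    x * ∏ k ∈ s, (x + z - c k) = x * ∏ k ∈ s, (x - c k) := by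
  induction s using Finset.induction_on with
  | empty => simp
  | @insert a s ha ih =>
    have hstep : x * (x + z - c a) = x * (x - c a) := by linear_combination hxz
    rw [Finset.prod_insert ha, Finset.prod_insert ha]
    calc x * ((x + z - c a) * ∏ k ∈ s, (x + z - c k))
        = (x + z - c a) * (x * ∏ k ∈ s, (x + z - c k)) := by ring
      _ = (x + z - c a) * (x * ∏ k ∈ s, (x - c k)) := by rw [ih]
      _ = (x * (x + z - c a)) * ∏ k ∈ s, (x - c k) := by ring
      _ = (x * (x - c a)) * ∏ k ∈ s, (x - c k) := by rw [hstep]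
      _ = x * ((x - c a) * ∏ k ∈ s, (x - c k)) := by ring

/-- factorization of the Branson–Gover element in the exceptional case β = 0. -/
theorem Lel_factorization_beta_zero {A : Type*} [CommRing A] [Algebra ℂ A]
    (x z : A) (hxz : x * z = 0) (t : ℂ) (N : ℕ) (hN : 1 ≤ N) :
    Lel x z 0 t N =
      (N:ℂ) • ((x - z) * ∏ k ∈ Finset.Icc 2 N, (x + z - ((k:ℂ)*((k:ℂ) - 1)*t) • (1 : A))) := by
  have hins : Finset.Icc 1 N = insert 1 (Finset.Icc 2 N) := by
    ext k; simp [Finset.mem_Icc, Finset.mem_insert]; omega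
  have h1not : (1:ℕ) ∉ Finset.Icc 2 N := by simp
  -- Step A : Ppoly
  have hP : Ppoly x 0 t N = x * ∏ k ∈ Finset.Icc 2 N, (x - ((k:ℂ)*((k:ℂ) - 1)*t) • (1 : A)) := by
    unfold Ppoly
    have hfac : ∀ l : ℕ, x + ((0/2 + (l:ℂ) - 1) * (0/2 - (l:ℂ)) * t) • (1 : A)
        = x - ((l:ℂ)*((l:ℂ) - 1)*t) • (1 : A) := by
      intro l
      have h : ((0/2 + (l:ℂ) - 1) * (0/2 - (l:ℂ)) * t) • (1:A)
          = -(((l:ℂ)*((l:ℂ) - 1)*t) • (1:A)) := by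
        rw [← neg_smul]; congr 1; ring
      rw [h]; exact (sub_eq_add_neg _ _).symm
    simp only [hfac]
    rw [hins, Finset.prod_insert h1not]
    norm_num
  -- Step B : Qpoly
  have hQ : Qpoly z 0 t N = z * ∏ k ∈ Finset.Icc 2 N, (z - ((k:ℂ)*((k:ℂ) - 1)*t) • (1 : A)) := by
    unfold Qpoly
    rw [Finset.sum_eq_single_of_mem N (by simp [Finset.mem_Icc]; omega)]
    · simp only [Nat.sub_self, mul_zero, pow_zero, mul_one, poch, Finset.range_zero,
        Finset.prod_empty, one_smul]
      -- reindex the product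
      have hre : ∏ l ∈ Finset.Icc 1 (N-1),
          (z + ((0/2 + (N:ℂ) - (l:ℂ) + 1) * (0/2 - (N:ℂ) + (l:ℂ)) * t) • (1 : A))
          = ∏ k ∈ Finset.Icc 2 N, (z - ((k:ℂ)*((k:ℂ) - 1)*t) • (1 : A)) := by
        refine Finset.prod_nbij' (fun l => N + 1 - l) (fun k => N + 1 - k) ?_ ?_ ?_ ?_ ?_
        · intro a ha; simp only [Finset.mem_Icc] at *; omega
        · intro a ha; simp only [Finset.mem_Icc] at *; omega
        · intro a ha; simp only [Finset.mem_Icc] at *; omega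
        · intro a ha; simp only [Finset.mem_Icc] at *; omega
        · intro l hl
          simp only [Finset.mem_Icc] at hl
          have hcast : ((N + 1 - l : ℕ) : ℂ) = (N:ℂ) + 1 - (l:ℂ) := by
            have : l ≤ N + 1 := by omega
            push_cast [Nat.cast_sub this]; ring
          rw [hcast]
          have : ((0/2 + (N:ℂ) - (l:ℂ) + 1) * (0/2 - (N:ℂ) + (l:ℂ)) * t)
              = -(((N:ℂ) + 1 - (l:ℂ)) * (((N:ℂ) + 1 - (l:ℂ)) - 1) * t) := by ring
          rw [this, neg_smul]; exact (sub_eq_add_neg _ _).symm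
      rw [hre]
    · intro j hj hjne
      simp only [Finset.mem_Icc] at hj
      have hpoch0 : poch (0/2 - (N:ℂ) + (j:ℂ) + 1) (2*(N-j)) = 0 := by
        unfold poch
        apply Finset.prod_eq_zero (i := N - j - 1)
        · simp only [Finset.mem_range]; omega
        · have hc : ((N - j - 1 : ℕ) : ℂ) = (N:ℂ) - (j:ℂ) - 1 := by
            have h1 : j + 1 ≤ N := by omega
            push_cast [Nat.cast_sub (by omega : j ≤ N - 1), Nat.cast_sub (by omega : 1 ≤ N - j)]
            push_cast [Nat.cast_sub (by omega : j ≤ N)]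
            ring
          rw [hc]; ring
      rw [hpoch0, zero_mul, zero_smul]
  -- Step C : combine
  unfold Lel
  rw [hP, hQ]
  have hzx : z * x = 0 := by rw [mul_comm]; exact hxz
  have h1 : x * ∏ k ∈ Finset.Icc 2 N, (x + z - ((k:ℂ)*((k:ℂ) - 1)*t) • (1 : A))
      = x * ∏ k ∈ Finset.Icc 2 N, (x - ((k:ℂ)*((k:ℂ) - 1)*t) • (1 : A)) :=
    mul_prod_key x z hxz _ _
  have h2 : z * ∏ k ∈ Finset.Icc 2 N, (z + x - ((k:ℂ)*((k:ℂ) - 1)*t) • (1 : A))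
      = z * ∏ k ∈ Finset.Icc 2 N, (z - ((k:ℂ)*((k:ℂ) - 1)*t) • (1 : A)) :=
    mul_prod_key z x hzx _ _
  have hcomm : ∀ k : ℕ, z + x - ((k:ℂ)*((k:ℂ) - 1)*t) • (1 : A)
      = x + z - ((k:ℂ)*((k:ℂ) - 1)*t) • (1 : A) := by intro k; ring
  simp only [hcomm] at h2
  rw [sub_mul, ← h1, ← h2]
  have e1 : (0/2 + (N:ℂ)) = (N:ℂ) := by norm_num
  have e2 : (0/2 - (N:ℂ)) = -(N:ℂ) := by norm_num
  rw [e1, e2, neg_smul, smul_sub, ← sub_eq_add_neg]
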